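/- For every integer n ≥ 2, the double integral ((n−1)/(2π)) · ∫_0^1 ∫_0^{2π} r·(1 − r²)^{(n−1)/2} / (1 − r²·sin²(φ))^{3/2} dφ dr equals γ(n) = (2/n)·(Γ((n+1)/2)/Γ(n/2))². -/

import Mathlib

/-!
With `a = (n - 1) / 2`, the substitution `(x, y) = (r cos φ, r sin φ)` turns the double integral
into `∫∫ (1 - x² - y²)^a / (1 - y²)^(3/2)` over the unit disc. Integrating first in `x` along the
chord of half-length `√(1 - y²)` gives `(1 - y²)^(a - 1) ∫₋₁¹ (1 - t²)^a dt`, so the integral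
factorises into two integrals `∫₋₁¹ (1 - t²)^p dt = √π Γ(p + 1) / Γ(p + 3/2)` (a Beta integral
and the duplication formula), with `p = a` and `p = a - 1`.
-/

noncomputable def gam (n : ℕ) : ℝ :=
  2 / (n : ℝ) * (Real.Gamma (((n : ℝ) + 1) / 2) / Real.Gamma ((n : ℝ) / 2)) ^ 2

open Real MeasureTheory Set intervalIntegral

theorem mul_cos_sq_add_mul_sin_sq (r θ : ℝ) : (r * cos θ) ^ 2 + (r * sin θ) ^ 2 = r ^ 2 := by
  linear_combination r ^ 2 * cos_sq_add_sin_sq θ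

section Polar

variable {E : Type*} [NormedAddCommGroup E] [NormedSpace ℝ E]

theorem integral_eq_integral_Ioi_integral_Ioo_polar {f : ℝ × ℝ → E} (hf : Integrable f) :
    ∫ p, f p = ∫ r in Ioi 0, ∫ θ in Ioo (-π) π, r • f (r * cos θ, r * sin θ) := by
  have hmeas : MeasurableSet polarCoord.target := polarCoord.open_target.measurableSet
  have hint : IntegrableOn (fun p : ℝ × ℝ => p.1 • f (polarCoord.symm p)) polarCoord.target := by
    have h := (integrableOn_image_iff_integrableOn_abs_det_fderiv_smul volume hmeas
      (fun p _ => (hasFDerivAt_polarCoord_symm p).hasFDerivWithinAt) polarCoord.symm.injOn f).1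
      hf.integrableOn
    refine h.congr_fun (fun p hp => ?_) hmeas
    simp only [det_fderivPolarCoordSymm, abs_of_pos (show 0 < p.1 from hp.1)]
  rw [polarCoord_target, Measure.volume_eq_prod] at hint
  rw [← integral_comp_polarCoord_symm, polarCoord_target, Measure.volume_eq_prod]
  exact setIntegral_prod _ hint

theorem integral_eq_integral_polar_of_eq_zero_of_one_lt {f : ℝ × ℝ → E} (hf : Integrable f)
    (hf₁ : ∀ p : ℝ × ℝ, 1 < p.1 ^ 2 + p.2 ^ 2 → f p = 0) :
    ∫ p, f p = ∫ r in (0 : ℝ)..1, ∫ θ in (0 : ℝ)..2 * π, r • f (r * cos θ, r * sin θ) := by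
  have hinner (r : ℝ) : ∫ θ in Ioo (-π) π, r • f (r * cos θ, r * sin θ)
      = ∫ θ in (0 : ℝ)..2 * π, r • f (r * cos θ, r * sin θ) := by
    have hper : Function.Periodic (fun θ => r • f (r * cos θ, r * sin θ)) (2 * π) := fun θ => by
      simp only [cos_add_two_pi, sin_add_two_pi]
    have h := hper.intervalIntegral_add_eq (-π) 0
    rw [show -π + 2 * π = π by ring, zero_add] at h
    rw [← integral_Ioc_eq_integral_Ioo, ← intervalIntegral.integral_of_le (by linarith [pi_pos]), h]
  rw [integral_eq_integral_Ioi_integral_Ioo_polar hf, intervalIntegral.integral_of_le zero_le_one,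
    ← setIntegral_eq_of_subset_of_forall_sdiff_eq_zero measurableSet_Ioi Ioc_subset_Ioi_self]
  · exact setIntegral_congr_fun measurableSet_Ioi fun r _ => hinner r
  · rintro r ⟨hr₀, hr⟩
    have hr₁ : 1 < r := by
      simp only [mem_Ioi] at hr₀
      simpa [hr₀] using hr
    rw [← hinner]
    refine setIntegral_eq_zero_of_forall_eq_zero fun θ _ => ?_
    have hnorm := mul_cos_sq_add_mul_sin_sq r θ
    rw [hf₁ (r * cos θ, r * sin θ) (by dsimp only; nlinarith), smul_zero]

end Polar

theorem integral_rpow_mul_one_sub_rpow {u v : ℝ} (hu : 0 < u) (hv : 0 < v) :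
    ∫ x in (0 : ℝ)..1, x ^ (u - 1) * (1 - x) ^ (v - 1) = Gamma u * Gamma v / Gamma (u + v) := by
  have h : Complex.betaIntegral u v =
      ((∫ x in (0 : ℝ)..1, x ^ (u - 1) * (1 - x) ^ (v - 1) : ℝ) : ℂ) := by
    rw [Complex.betaIntegral, ← intervalIntegral.integral_ofReal]
    refine integral_congr fun x hx => ?_
    rw [uIcc_of_le zero_le_one] at hx
    rw [Complex.ofReal_mul, Complex.ofReal_cpow hx.1, Complex.ofReal_cpow (sub_nonneg.2 hx.2)]
    push_cast
    ring
  have := ProbabilityTheory.beta_eq_betaIntegralReal u v hu hv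
  rw [h, Complex.ofReal_re] at this
  exact this.symm

theorem integral_one_sub_sq_rpow {p : ℝ} (hp : -1 < p) :
    ∫ y in (-1 : ℝ)..1, (1 - y ^ 2) ^ p = √π * Gamma (p + 1) / Gamma (p + 3 / 2) := by
  have hsub : ∫ y in (-1 : ℝ)..1, (1 - y ^ 2) ^ p
      = 2 * ∫ t in (0 : ℝ)..1, (1 - (2 * t - 1) ^ 2) ^ p := by
    rw [integral_comp_mul_sub (fun y => (1 - y ^ 2) ^ p) two_ne_zero]
    norm_num
    ring
  have hbeta : ∫ t in (0 : ℝ)..1, (1 - (2 * t - 1) ^ 2) ^ p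
      = 4 ^ p * ∫ t in (0 : ℝ)..1, t ^ (p + 1 - 1) * (1 - t) ^ (p + 1 - 1) := by
    rw [← intervalIntegral.integral_const_mul]
    refine integral_congr fun t ht => ?_
    rw [uIcc_of_le zero_le_one] at ht
    rw [add_sub_cancel_right, ← mul_assoc, ← mul_rpow (by norm_num) ht.1,
      ← mul_rpow (mul_nonneg (by norm_num) ht.1) (sub_nonneg.2 ht.2)]
    ring_nf
  have hp1 : 0 < p + 1 := by linarith
  have hdup := Gamma_mul_Gamma_add_half (p + 1)
  have hpow : (2 : ℝ) * 4 ^ p * 2 ^ (1 - 2 * (p + 1)) = 1 := by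
    rw [show (4 : ℝ) = 2 ^ (2 : ℝ) by norm_num, ← rpow_mul zero_le_two, mul_assoc,
      ← rpow_add two_pos, show 2 * p + (1 - 2 * (p + 1)) = -1 by ring, rpow_neg_one]
    norm_num
  rw [hsub, hbeta, integral_rpow_mul_one_sub_rpow hp1 hp1]
  have hG : Gamma (p + 3 / 2) ≠ 0 := (Gamma_pos_of_pos (by linarith)).ne'
  have hG2 : Gamma (2 * (p + 1)) ≠ 0 := (Gamma_pos_of_pos (by linarith)).ne'
  rw [show p + 1 + 1 / 2 = p + 3 / 2 by ring] at hdup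
  rw [show p + 1 + (p + 1) = 2 * (p + 1) by ring, eq_div_iff hG]
  calc 2 * (4 ^ p * (Gamma (p + 1) * Gamma (p + 1) / Gamma (2 * (p + 1)))) * Gamma (p + 3 / 2)
      = 2 * 4 ^ p * Gamma (p + 1) * (Gamma (p + 1) * Gamma (p + 3 / 2)) / Gamma (2 * (p + 1)) := by
        ring
    _ = 2 * 4 ^ p * 2 ^ (1 - 2 * (p + 1)) * (√π * Gamma (p + 1)) *
          (Gamma (2 * (p + 1)) / Gamma (2 * (p + 1))) := by
        rw [hdup]; ring
    _ = √π * Gamma (p + 1) := by rw [hpow, div_self hG2]; ring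

theorem intervalIntegrable_one_sub_sq_rpow {p : ℝ} (hp : -1 < p) :
    IntervalIntegrable (fun y : ℝ => (1 - y ^ 2) ^ p) volume (-1) 1 := by
  refine intervalIntegrable_of_integral_ne_zero ?_
  rw [integral_one_sub_sq_rpow hp]
  have := Gamma_pos_of_pos (show 0 < p + 1 by linarith)
  have := Gamma_pos_of_pos (show 0 < p + 3 / 2 by linarith)
  positivity

theorem integral_sub_sq_rpow {s : ℝ} (hs : 0 < s) (a : ℝ) :
    ∫ x in -√s..√s, (s - x ^ 2) ^ a = s ^ (a + 1 / 2) * ∫ t in (-1 : ℝ)..1, (1 - t ^ 2) ^ a := by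
  have hc : √s ≠ 0 := (sqrt_pos.2 hs).ne'
  have h := intervalIntegral.integral_comp_mul_left (fun x : ℝ => (s - x ^ 2) ^ a)
    (a := -1) (b := 1) hc
  simp only [mul_neg, mul_one] at h
  rw [eq_inv_smul_iff₀ hc, smul_eq_mul] at h
  rw [← h, rpow_add hs, ← sqrt_eq_rpow, mul_comm (s ^ a), mul_assoc]
  congr 1
  rw [← intervalIntegral.integral_const_mul]
  refine integral_congr fun t ht => ?_
  rw [uIcc_of_le (by norm_num)] at ht
  have ht2 : 0 ≤ 1 - t ^ 2 := by nlinarith [ht.1, ht.2]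
  rw [mul_pow, sq_sqrt hs.le, ← mul_rpow hs.le ht2]
  ring_nf

/-- Taking the closed disc makes `diskWeight_polar` hold up to `r = 1`; at `(0, ±1)` the value
is `0` through the junk value of `/ 0`. -/
noncomputable def diskWeight (a : ℝ) (p : ℝ × ℝ) : ℝ :=
  if p.1 ^ 2 + p.2 ^ 2 ≤ 1 then (1 - p.2 ^ 2 - p.1 ^ 2) ^ a / (1 - p.2 ^ 2) ^ (3 / 2 : ℝ) else 0

theorem measurable_diskWeight (a : ℝ) : Measurable (diskWeight a) :=
  Measurable.ite (measurableSet_le (by fun_prop) measurable_const) (by fun_prop) measurable_const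

theorem diskWeight_nonneg (a : ℝ) (p : ℝ × ℝ) : 0 ≤ diskWeight a p := by
  unfold diskWeight
  split_ifs with h
  · have : 0 ≤ 1 - p.2 ^ 2 - p.1 ^ 2 := by linarith
    have : 0 ≤ 1 - p.2 ^ 2 := by nlinarith
    positivity
  · exact le_rfl

theorem diskWeight_of_one_lt {a : ℝ} {p : ℝ × ℝ} (hp : 1 < p.1 ^ 2 + p.2 ^ 2) :
    diskWeight a p = 0 :=
  if_neg hp.not_ge

theorem diskWeight_polar (a : ℝ) {r : ℝ} (hr₀ : 0 ≤ r) (hr₁ : r ≤ 1) (θ : ℝ) :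
    diskWeight a (r * cos θ, r * sin θ) = (1 - r ^ 2) ^ a / (1 - r ^ 2 * sin θ ^ 2) ^ (3 / 2 : ℝ) := by
  have hnorm := mul_cos_sq_add_mul_sin_sq r θ
  rw [diskWeight, if_pos (by nlinarith)]
  congr 2
  · linear_combination -hnorm
  · ring

theorem diskWeight_slice_eq_indicator {a y : ℝ} (hy : y ^ 2 < 1) :
    (fun x => diskWeight a (x, y)) = (Icc (-√(1 - y ^ 2)) √(1 - y ^ 2)).indicator
      fun x => (1 - y ^ 2 - x ^ 2) ^ a / (1 - y ^ 2) ^ (3 / 2 : ℝ) := by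
  ext x
  have hmem : x ∈ Icc (-√(1 - y ^ 2)) √(1 - y ^ 2) ↔ x ^ 2 + y ^ 2 ≤ 1 := by
    rw [mem_Icc, ← abs_le, ← sqrt_sq_eq_abs, sqrt_le_sqrt_iff (by linarith)]
    constructor <;> intro h <;> linarith
  simp only [diskWeight, indicator, hmem]

theorem diskWeight_slice_of_one_le_sq {a y : ℝ} (hy : 1 ≤ y ^ 2) (x : ℝ) :
    diskWeight a (x, y) = 0 := by
  rcases hy.lt_or_eq with hy | hy
  · exact diskWeight_of_one_lt (by nlinarith)
  · simp [diskWeight, ← hy, zero_rpow (by norm_num : (3 / 2 : ℝ) ≠ 0)]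

theorem integral_diskWeight_slice {a y : ℝ} (hy : y ^ 2 < 1) :
    ∫ x, diskWeight a (x, y) = (1 - y ^ 2) ^ (a - 1) * ∫ t in (-1 : ℝ)..1, (1 - t ^ 2) ^ a := by
  have hs : 0 < 1 - y ^ 2 := by linarith
  rw [diskWeight_slice_eq_indicator hy, MeasureTheory.integral_indicator measurableSet_Icc,
    integral_Icc_eq_integral_Ioc, ← intervalIntegral.integral_of_le (by simp [sqrt_nonneg]),
    intervalIntegral.integral_div, integral_sub_sq_rpow hs, mul_div_right_comm, ← rpow_sub hs]
  congr 2
  ring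

theorem integral_diskWeight_slice_eq_indicator (a y : ℝ) :
    ∫ x, diskWeight a (x, y) = (Ioo (-1) 1).indicator
      (fun y => (1 - y ^ 2) ^ (a - 1) * ∫ t in (-1 : ℝ)..1, (1 - t ^ 2) ^ a) y := by
  by_cases hy : y ^ 2 < 1
  · rw [indicator_of_mem (by rwa [mem_Ioo, ← abs_lt, ← sq_lt_one_iff_abs_lt_one]),
      integral_diskWeight_slice hy]
  · rw [indicator_of_notMem (by rwa [mem_Ioo, ← abs_lt, ← sq_lt_one_iff_abs_lt_one]),
      funext (diskWeight_slice_of_one_le_sq (not_lt.1 hy)), integral_zero]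

theorem integrable_diskWeight_slice {a : ℝ} (ha : -1 < a) (y : ℝ) :
    Integrable fun x => diskWeight a (x, y) := by
  by_cases hy : y ^ 2 < 1
  · refine .of_integral_ne_zero ?_
    rw [integral_diskWeight_slice hy, integral_one_sub_sq_rpow ha]
    have := Gamma_pos_of_pos (show 0 < a + 1 by linarith)
    have := Gamma_pos_of_pos (show 0 < a + 3 / 2 by linarith)
    have : 0 < 1 - y ^ 2 := by linarith
    positivity
  · rw [funext (diskWeight_slice_of_one_le_sq (not_lt.1 hy))]
    exact integrable_zero _ _ _

theorem integrable_diskWeight {a : ℝ} (ha : 0 < a) : Integrable (diskWeight a) := by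
  rw [Measure.volume_eq_prod,
    integrable_prod_iff' (measurable_diskWeight a).aestronglyMeasurable]
  refine ⟨ae_of_all _ (integrable_diskWeight_slice (by linarith)), ?_⟩
  simp_rw [Real.norm_of_nonneg (diskWeight_nonneg _ _), integral_diskWeight_slice_eq_indicator]
  rw [integrable_indicator_iff measurableSet_Ioo]
  have h := (intervalIntegrable_one_sub_sq_rpow (show -1 < a - 1 by linarith)).mul_const
    (∫ t in (-1 : ℝ)..1, (1 - t ^ 2) ^ a)
  rw [intervalIntegrable_iff_integrableOn_Ioc_of_le (by norm_num)] at h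
  exact h.mono_set Ioo_subset_Ioc_self

theorem integral_diskWeight {a : ℝ} (ha : 0 < a) :
    ∫ p, diskWeight a p = π * Gamma a * Gamma (a + 1) / (Gamma (a + 1 / 2) * Gamma (a + 3 / 2)) := by
  rw [Measure.volume_eq_prod, integral_prod_symm _ (integrable_diskWeight ha)]
  simp_rw [integral_diskWeight_slice_eq_indicator]
  rw [MeasureTheory.integral_indicator measurableSet_Ioo, ← integral_Ioc_eq_integral_Ioo,
    ← intervalIntegral.integral_of_le (by norm_num), intervalIntegral.integral_mul_const,
    integral_one_sub_sq_rpow (by linarith), integral_one_sub_sq_rpow (by linarith),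
    sub_add_cancel, show a - 1 + 3 / 2 = a + 1 / 2 by ring]
  linear_combination
    Gamma a * Gamma (a + 1) / (Gamma (a + 1 / 2) * Gamma (a + 3 / 2)) * mul_self_sqrt pi_pos.le

theorem stmt13 (n : ℕ) (hn : 2 ≤ n) :
    ((n : ℝ) - 1) / (2 * Real.pi) *
      ∫ r in (0 : ℝ)..1, ∫ φ in (0 : ℝ)..(2 * Real.pi),
        r * (1 - r ^ 2) ^ (((n : ℝ) - 1) / 2) /
          (1 - r ^ 2 * Real.sin φ ^ 2) ^ ((3 : ℝ) / 2) = gam n := by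
  set a : ℝ := ((n : ℝ) - 1) / 2 with ha_def
  have ha : 0 < a := by
    have : (2 : ℝ) ≤ n := by exact_mod_cast hn
    linarith
  have hdisk : ∫ r in (0 : ℝ)..1, ∫ φ in (0 : ℝ)..(2 * π),
      r * (1 - r ^ 2) ^ a / (1 - r ^ 2 * sin φ ^ 2) ^ ((3 : ℝ) / 2) = ∫ p, diskWeight a p := by
    rw [integral_eq_integral_polar_of_eq_zero_of_one_lt (integrable_diskWeight ha)
      fun p => diskWeight_of_one_lt]
    refine integral_congr fun r hr => integral_congr fun φ _ => ?_
    rw [uIcc_of_le zero_le_one] at hr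
    rw [smul_eq_mul, diskWeight_polar a hr.1 hr.2, mul_div_assoc]
  have hn₀ : (n : ℝ) / 2 ≠ 0 := by positivity
  rw [hdisk, integral_diskWeight ha, gam, show a + 1 / 2 = n / 2 by ring,
    show a + 3 / 2 = n / 2 + 1 by ring, Gamma_add_one hn₀,
    show ((n : ℝ) + 1) / 2 = a + 1 by ring, Gamma_add_one ha.ne']
  have := Gamma_pos_of_pos ha
  field_simp
  ring
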